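/- arXiv:0812.3974 — 5 statements merged into one kernel-verified Lean document; each statement's English description precedes it below -/
import Mathlib

section
/- For all natural numbers n ≥ 0, the q-identity ∑_{j=0}^{n} (n!/j!) (∑_{k=0}^{n-j} (-1)^k/k!) q^{1-j}[j]_q = ∑_{i=0}^{n-1} (n!/(i+1)!) (q^2-1)^i holds, where [j]_q = (q^j - q^{-j})/(q - q^{-1}) (so q^{1-j}[j]_q = 1 + q^2 + ... + q^{2j-2}). -/
open Finset

lemma alt_choose (n : ℕ) (hn : n ≠ 0) :
    ∑ a ∈ range (n+1), (-1:ℚ)^a * n.choose a = 0 := by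
  have h := Int.alternating_sum_range_choose (n := n)
  rw [if_neg hn] at h
  have h2 : ((∑ i ∈ range (n+1), (-1:ℤ)^i * n.choose i : ℤ) : ℚ) = 0 := by rw [h]; norm_num
  push_cast at h2
  exact h2

lemma inv_fact_fact (n a : ℕ) (ha : a ≤ n) :
    (1:ℚ)/(((n-a).factorial:ℚ) * a.factorial) = (n.choose a) / n.factorial := by
  have hc : ((n.choose a * a.factorial * (n-a).factorial : ℕ) : ℚ) = (n.factorial : ℚ) := by
    exact_mod_cast congrArg Nat.cast (Nat.choose_mul_factorial_mul_factorial ha)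
  push_cast at hc
  have h1 : ((n-a).factorial : ℚ) ≠ 0 := Nat.cast_ne_zero.mpr (Nat.factorial_ne_zero _)
  have h2 : (a.factorial : ℚ) ≠ 0 := Nat.cast_ne_zero.mpr (Nat.factorial_ne_zero _)
  have h3 : (n.factorial : ℚ) ≠ 0 := Nat.cast_ne_zero.mpr (Nat.factorial_ne_zero _)
  field_simp
  linarith [hc]

lemma Ezero (N : ℕ) :
    ∑ a ∈ range (N+2), (-1:ℚ)^(N+1-a) / (((N+1-a).factorial:ℚ) * a.factorial) = 0 := by
  have h : ∀ a ∈ range (N+2), (-1:ℚ)^(N+1-a) / (((N+1-a).factorial:ℚ) * a.factorial)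
      = ((-1:ℚ)^(N+1) / ((N+1).factorial:ℚ)) * ((-1)^a * ((N+1).choose a)) := by
    intro a ha
    have ha' : a ≤ N+1 := Nat.lt_succ_iff.mp (mem_range.mp ha)
    have hs : (-1:ℚ)^(N+1-a) = (-1)^(N+1) * (-1)^a := by
      have h1 : (-1:ℚ)^(N+1-a) * (-1)^a = (-1)^(N+1) := by
        rw [← pow_add, Nat.sub_add_cancel ha']
      have h2 : (-1:ℚ)^a * (-1)^a = 1 := by rw [← mul_pow]; norm_num
      calc (-1:ℚ)^(N+1-a) = (-1:ℚ)^(N+1-a) * ((-1)^a * (-1)^a) := by rw [h2, mul_one]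
        _ = (-1)^(N+1) * (-1)^a := by rw [← mul_assoc, h1]
    rw [hs, div_eq_mul_one_div, inv_fact_fact _ _ ha']
    ring
  rw [sum_congr rfl h, ← mul_sum, alt_choose (N+1) (Nat.succ_ne_zero N), mul_zero]

lemma diag (N : ℕ) :
    ∑ a ∈ range (N+1), (∑ k ∈ range (N - a + 1), (-1:ℚ)^k / k.factorial) / a.factorial = 1 := by
  induction N with
  | zero => simp
  | succ N ih =>
    have step : ∀ a ∈ range (N+1),
        (∑ k ∈ range (N + 1 - a + 1), (-1:ℚ)^k / k.factorial) / a.factorial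
        = (∑ k ∈ range (N - a + 1), (-1:ℚ)^k / k.factorial) / a.factorial
          + (-1:ℚ)^(N+1-a) / (((N+1-a).factorial:ℚ) * a.factorial) := by
      intro a ha
      have ha' : a ≤ N := Nat.lt_succ_iff.mp (mem_range.mp ha)
      have h1 : N + 1 - a + 1 = (N - a + 1) + 1 := by omega
      have h2 : N - a + 1 = N + 1 - a := by omega
      rw [h1, sum_range_succ, add_div, h2, div_div]
    rw [sum_range_succ, sum_congr rfl step, sum_add_distrib, ih]
    have hlast : (∑ k ∈ range (N + 1 - (N+1) + 1), (-1:ℚ)^k / k.factorial) / (N+1).factorial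
        = (-1:ℚ)^(N+1-(N+1)) / (((N+1-(N+1)).factorial:ℚ) * (N+1).factorial) := by
      simp
    rw [hlast, add_assoc, ← sum_range_succ
      (fun a => (-1:ℚ)^(N+1-a) / (((N+1-a).factorial:ℚ) * a.factorial)) (N+1), Ezero, add_zero]

lemma coeff (n m : ℕ) (hm : m < n) :
    ∑ j ∈ range (n+1),
      (((n.factorial:ℚ)/(j.factorial:ℚ)) * ∑ k ∈ range (n-j+1), (-1:ℚ)^k/k.factorial)
        * (j.choose (m+1)) = (n.factorial:ℚ)/((m+1).factorial:ℚ) := by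
  set f : ℕ → ℚ := fun j =>
    (((n.factorial:ℚ)/(j.factorial:ℚ)) * ∑ k ∈ range (n-j+1), (-1:ℚ)^k/k.factorial)
      * (j.choose (m+1)) with hf
  have hsub : ∑ j ∈ range (n+1), f j = ∑ j ∈ Ico (m+1) (n+1), f j := by
    refine (sum_subset (fun x hx => mem_range.mpr (mem_Ico.mp hx).2) ?_).symm
    intro x hx hnx
    have hx' : x < m + 1 := by
      rcases mem_range.mp hx with h
      by_contra hcon
      exact hnx (mem_Ico.mpr ⟨Nat.le_of_not_lt hcon, h⟩)
    have : x.choose (m+1) = 0 := Nat.choose_eq_zero_of_lt hx'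
    simp [hf, this]
  have hterm : ∀ a ∈ range (n - m), f (m + 1 + a)
      = ((n.factorial:ℚ)/((m+1).factorial:ℚ)) *
        ((∑ k ∈ range ((n - m - 1) - a + 1), (-1:ℚ)^k/k.factorial) / a.factorial) := by
    intro a ha
    have ha' : a < n - m := mem_range.mp ha
    have hje : m + 1 + a ≤ n := by omega
    have hrange : n - (m + 1 + a) + 1 = (n - m - 1) - a + 1 := by omega
    have hcc : ((m+1+a).choose (m+1) * (m+1).factorial * a.factorial : ℕ) = (m+1+a).factorial := by
      have := Nat.choose_mul_factorial_mul_factorial (Nat.le_add_right (m+1) a)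
      simpa [Nat.add_sub_cancel_left] using this
    have hccq : (((m+1+a).choose (m+1) : ℚ) * (m+1).factorial * a.factorial) = ((m+1+a).factorial : ℚ) := by
      exact_mod_cast congrArg Nat.cast hcc
    have h1 : ((m+1+a).factorial : ℚ) ≠ 0 := Nat.cast_ne_zero.mpr (Nat.factorial_ne_zero _)
    have h2 : ((m+1).factorial : ℚ) ≠ 0 := Nat.cast_ne_zero.mpr (Nat.factorial_ne_zero _)
    have h3 : (a.factorial : ℚ) ≠ 0 := Nat.cast_ne_zero.mpr (Nat.factorial_ne_zero _)
    simp only [hf]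
    rw [hrange]
    have key : ((n.factorial:ℚ)/((m+1+a).factorial:ℚ)) * ((m+1+a).choose (m+1) : ℚ)
        = ((n.factorial:ℚ)/((m+1).factorial:ℚ)) * (1 / a.factorial) := by
      field_simp
      linear_combination hccq
    calc ((n.factorial:ℚ)/((m+1+a).factorial:ℚ) * ∑ k ∈ range ((n-m-1) - a + 1), (-1:ℚ)^k/k.factorial)
          * ((m+1+a).choose (m+1) : ℚ)
        = (((n.factorial:ℚ)/((m+1+a).factorial:ℚ)) * ((m+1+a).choose (m+1) : ℚ))
          * ∑ k ∈ range ((n-m-1) - a + 1), (-1:ℚ)^k/k.factorial := by ring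
      _ = _ := by rw [key]; ring
  rw [hsub, Finset.sum_Ico_eq_sum_range]
  have hnm : n + 1 - (m + 1) = (n - m - 1) + 1 := by omega
  rw [hnm] at *
  have : ∑ a ∈ range (n - m - 1 + 1), f (m + 1 + a)
      = ((n.factorial:ℚ)/((m+1).factorial:ℚ)) *
        ∑ a ∈ range (n - m - 1 + 1), ((∑ k ∈ range ((n - m - 1) - a + 1), (-1:ℚ)^k/k.factorial) / a.factorial) := by
    rw [mul_sum]
    refine sum_congr rfl ?_
    intro a ha
    exact hterm a (by rw [mem_range] at *; omega)
  rw [this, _root_.diag, mul_one]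

lemma pow_two_mul_expand {A : Type*} [CommRing A] [Algebra ℚ A] (q : A) (j : ℕ) :
    q^(2*j) = ∑ m ∈ range (j+1), ((j.choose m : ℚ)) • (q^2-1)^m := by
  have h : q^(2*j) = ((q^2-1)+1)^j := by rw [sub_add_cancel, ← pow_mul]
  rw [h, add_pow]
  refine sum_congr rfl fun m hm => ?_
  rw [one_pow, mul_one, Algebra.smul_def]
  rw [show ((j.choose m : ℚ)) = ((j.choose m : ℕ) : ℚ) from rfl, map_natCast]
  ring

lemma Sj {A : Type*} [CommRing A] [Algebra ℚ A] (q : A) (j : ℕ) :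
    ∑ l ∈ range j, q^(2*l) = ∑ m ∈ range j, ((j.choose (m+1) : ℚ)) • (q^2-1)^m := by
  induction j with
  | zero => simp
  | succ j ih =>
    rw [sum_range_succ, ih, pow_two_mul_expand]
    have h1 : ∀ m ∈ range (j+1), (((j+1).choose (m+1) : ℚ)) • (q^2-1)^m
        = ((j.choose m : ℚ)) • (q^2-1)^m + ((j.choose (m+1) : ℚ)) • (q^2-1)^m := by
      intro m hm
      rw [Nat.choose_succ_succ]
      push_cast
      rw [add_smul]
    rw [sum_congr rfl h1, sum_add_distrib]
    rw [add_comm]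
    congr 1
    rw [sum_range_succ, Nat.choose_succ_self]
    simp


/-- the q-identity
`∑_{j=0}^{n} (n!/j!)(∑_{k=0}^{n-j} (-1)^k/k!) q^{1-j}[j]_q = ∑_{i=0}^{n-1} (n!/(i+1)!)(q²-1)^i`,
where `q^{1-j}[j]_q` is interpreted as the polynomial `1 + q² + ⋯ + q^{2j-2}`,
for `q` in a commutative `ℚ`-algebra. -/
theorem stmt_0 {A : Type*} [CommRing A] [Algebra ℚ A] (q : A) (n : ℕ) :
    ∑ j ∈ Finset.range (n + 1),
      (((n.factorial : ℚ) / (j.factorial : ℚ)) *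
        ∑ k ∈ Finset.range (n - j + 1), (-1 : ℚ) ^ k / (k.factorial : ℚ)) •
          (∑ l ∈ Finset.range j, q ^ (2 * l)) =
    ∑ i ∈ Finset.range n,
      ((n.factorial : ℚ) / ((i + 1).factorial : ℚ)) • (q ^ 2 - 1) ^ i := by
  set c : ℕ → ℚ := fun j =>
    ((n.factorial : ℚ) / (j.factorial : ℚ)) *
      ∑ k ∈ Finset.range (n - j + 1), (-1 : ℚ) ^ k / (k.factorial : ℚ) with hc
  have step1 : ∀ j ∈ range (n+1),
      c j • (∑ l ∈ range j, q ^ (2*l))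
        = ∑ m ∈ range n, (c j * (j.choose (m+1) : ℚ)) • (q^2-1)^m := by
    intro j hj
    rw [Sj q j, smul_sum]
    have h2 : ∀ m ∈ range j, c j • (((j.choose (m+1) : ℚ)) • (q^2-1)^m)
        = (c j * (j.choose (m+1) : ℚ)) • (q^2-1)^m := fun m _ => smul_smul _ _ _
    rw [sum_congr rfl h2]
    refine sum_subset ?_ ?_
    · exact range_subset_range.mpr (Nat.lt_succ_iff.mp (mem_range.mp hj))
    · intro m hmn hmj
      have : j < m + 1 := by simp only [mem_range] at hmn hmj; omega
      rw [Nat.choose_eq_zero_of_lt this]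
      simp
  rw [sum_congr rfl step1, sum_comm]
  refine sum_congr rfl fun m hm => ?_
  rw [← sum_smul, coeff n m (mem_range.mp hm)]
end

section
/- Define g_n(q) = ∑_{j=0}^{n} d_{n,j} · p_j(q), where d_{n,j} = (n!/j!) ∑_{k=0}^{n-j} (-1)^k/k! is the number of permutations of n elements with exactly j fixed points, and p_j(q) = ∑_{l=0}^{j-1} q^{2l}. Then g_0 = 0 and g_{n+1} = (n+1) g_n + (q^2-1)^n for all n ≥ 0. -/
/-- The rencontres number `d_{n,j} = (n!/j!) ∑_{k=0}^{n-j} (-1)^k/k!`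
(number of permutations of `n` elements with exactly `j` fixed points), as a rational. -/
def rencontres (n j : ℕ) : ℚ :=
  ((n.factorial : ℚ) / (j.factorial : ℚ)) *
    ∑ k ∈ Finset.range (n - j + 1), (-1 : ℚ) ^ k / (k.factorial : ℚ)

/-- `p_j(q) = ∑_{l=0}^{j-1} q^{2l}` (so `p_0 = 0`). -/
def stmt2P {A : Type*} [CommRing A] [Algebra ℚ A] (q : A) (j : ℕ) : A :=
  ∑ l ∈ Finset.range j, q ^ (2 * l)

/-- `g n = ∑_{j=0}^{n} d_{n,j} · p_j(q)`. -/
def stmt2G {A : Type*} [CommRing A] [Algebra ℚ A] (q : A) (n : ℕ) : A :=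
  ∑ j ∈ Finset.range (n + 1), rencontres n j • stmt2P q j

open Finset

lemma alt_partial (n : ℕ) : ∀ l : ℕ,
    ∑ j ∈ range (l + 1), (-1 : ℚ) ^ j * ((n + 1).choose j) = (-1) ^ l * (n.choose l) := by
  intro l
  induction l with
  | zero => simp
  | succ l ih =>
    rw [sum_range_succ, ih, Nat.choose_succ_succ]
    push_cast
    ring

lemma alt_tail (n l : ℕ) (h : l ≤ n) :
    ∑ j ∈ Ico (l + 1) (n + 2), (-1 : ℚ) ^ (n + 1 + j) * ((n + 1).choose j)
      = (-1) ^ (n + l) * (n.choose l) := by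
  have hfull : ∑ j ∈ range (n + 2), (-1 : ℚ) ^ j * ((n + 1).choose j) = 0 := by
    have := Int.alternating_sum_range_choose (n := n + 1)
    rw [if_neg (Nat.succ_ne_zero n)] at this
    exact_mod_cast congrArg (Int.cast : ℤ → ℚ) this
  have hsplit : ∑ j ∈ range (n + 2), (-1 : ℚ) ^ j * ((n + 1).choose j)
      = (∑ j ∈ range (l + 1), (-1 : ℚ) ^ j * ((n + 1).choose j))
        + ∑ j ∈ Ico (l + 1) (n + 2), (-1 : ℚ) ^ j * ((n + 1).choose j) := by
    exact (sum_range_add_sum_Ico _ (show l + 1 ≤ n + 2 by omega)).symm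
  have h2 : ∑ j ∈ Ico (l + 1) (n + 2), (-1 : ℚ) ^ j * ((n + 1).choose j)
      = -((-1) ^ l * (n.choose l)) := by
    have := alt_partial n l
    linarith [hsplit ▸ hfull, this]
  calc ∑ j ∈ Ico (l + 1) (n + 2), (-1 : ℚ) ^ (n + 1 + j) * ((n + 1).choose j)
      = (-1) ^ (n + 1) * ∑ j ∈ Ico (l + 1) (n + 2), (-1 : ℚ) ^ j * ((n + 1).choose j) := by
        rw [mul_sum]; congr 1; ext j; rw [pow_add]; ring
    _ = (-1) ^ (n + 1) * (-((-1) ^ l * (n.choose l))) := by rw [h2]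
    _ = (-1) ^ (n + l) * (n.choose l) := by rw [pow_add, pow_add]; ring

lemma rencontres_self (n : ℕ) : rencontres n n = 1 := by
  simp [rencontres, div_self (show (n.factorial : ℚ) ≠ 0 by exact_mod_cast n.factorial_ne_zero)]

lemma rencontres_succ (n j : ℕ) (h : j ≤ n) :
    rencontres (n + 1) j = (n + 1) * rencontres n j + (-1) ^ (n + 1 + j) * ((n + 1).choose j) := by
  have h1 : n + 1 - j = (n - j) + 1 := by omega
  have h2 : (-1 : ℚ) ^ (n - j + 1) = (-1) ^ (n + 1 + j) := by
    have e2 : (-1 : ℚ) ^ (n + 1 + j) = (-1) ^ (n - j + 1) * ((-1) ^ 2) ^ j := by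
      rw [← pow_mul, ← pow_add]; congr 1; omega
    rw [e2]; simp
  rw [rencontres, rencontres, h1, sum_range_succ, mul_add, Nat.factorial_succ]
  congr 1
  · push_cast; ring
  · rw [Nat.cast_choose ℚ (show j ≤ n + 1 by omega), h2]
    have h3 : n + 1 - j = n - j + 1 := h1
    rw [h3]
    have hj : (j.factorial : ℚ) ≠ 0 := by exact_mod_cast j.factorial_ne_zero
    have hnj : ((n - j + 1).factorial : ℚ) ≠ 0 := by exact_mod_cast (n - j + 1).factorial_ne_zero
    field_simp
    rw [show (((n + 1).factorial : ℚ)) = (n + 1) * n.factorial by exact_mod_cast Nat.factorial_succ n]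
    push_cast
    ring

lemma rencontres_key : ∀ n l : ℕ, (∑ j ∈ Ico (l + 1) (n + 1), rencontres n j)
    = ∑ m ∈ Ico l n, ((n.factorial : ℚ) / ((m + 1).factorial)) * ((-1) ^ (l + m) * (m.choose l)) := by
  intro n
  induction n with
  | zero =>
    intro l
    rw [Finset.Ico_eq_empty (by omega), Finset.Ico_eq_empty (by omega), sum_empty, sum_empty]
  | succ n ih =>
    intro l
    rcases Nat.lt_or_ge n l with h | h
    · rw [Finset.Ico_eq_empty (by omega), Finset.Ico_eq_empty (by omega), sum_empty, sum_empty]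
    · have step : ∀ j ∈ Ico (l + 1) (n + 1), rencontres (n + 1) j
          = (n + 1) * rencontres n j + (-1) ^ (n + 1 + j) * ((n + 1).choose j) := by
        intro j hj
        exact rencontres_succ n j (by have := (mem_Ico.mp hj).2; omega)
      calc ∑ j ∈ Ico (l + 1) (n + 2), rencontres (n + 1) j
          = (∑ j ∈ Ico (l + 1) (n + 1), rencontres (n + 1) j) + rencontres (n + 1) (n + 1) := by
            rw [sum_Ico_succ_top (by omega)]
        _ = (n + 1 : ℚ) * (∑ j ∈ Ico (l + 1) (n + 1), rencontres n j)
            + ((∑ j ∈ Ico (l + 1) (n + 1), (-1 : ℚ) ^ (n + 1 + j) * ((n + 1).choose j)) + 1) := by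
            rw [sum_congr rfl step, sum_add_distrib, mul_sum, rencontres_self]; ring
        _ = (n + 1 : ℚ) * (∑ j ∈ Ico (l + 1) (n + 1), rencontres n j)
            + ∑ j ∈ Ico (l + 1) (n + 2), (-1 : ℚ) ^ (n + 1 + j) * ((n + 1).choose j) := by
            rw [sum_Ico_succ_top (show l + 1 ≤ n + 1 by omega)]
            congr 1
            have : (-1 : ℚ) ^ (n + 1 + (n + 1)) = 1 := by
              rw [show n + 1 + (n + 1) = 2 * (n + 1) by ring, pow_mul]; simp
            rw [this, Nat.choose_self]; simp
        _ = (n + 1 : ℚ) * (∑ m ∈ Ico l n, ((n.factorial : ℚ) / ((m + 1).factorial))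
              * ((-1) ^ (l + m) * (m.choose l))) + (-1) ^ (n + l) * (n.choose l) := by
            rw [ih l, alt_tail n l h]
        _ = ∑ m ∈ Ico l (n + 1), (((n + 1).factorial : ℚ) / ((m + 1).factorial))
              * ((-1) ^ (l + m) * (m.choose l)) := by
            rw [sum_Ico_succ_top (show l ≤ n by omega), mul_sum]
            congr 1
            · apply sum_congr rfl
              intro m hm
              rw [show (((n + 1).factorial : ℚ)) = (n + 1) * n.factorial by
                exact_mod_cast Nat.factorial_succ n]
              ring
            · rw [div_self (show (((n + 1).factorial : ℚ)) ≠ 0 by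
                exact_mod_cast (n + 1).factorial_ne_zero), Nat.add_comm l n]
              ring

lemma swap_lt {M : Type*} [AddCommMonoid M] (n : ℕ) (f : ℕ → ℕ → M) :
    ∑ j ∈ range n, ∑ l ∈ range j, f j l = ∑ l ∈ range n, ∑ j ∈ Ico (l + 1) n, f j l := by
  induction n with
  | zero => simp
  | succ n ih =>
    rw [sum_range_succ, ih, sum_range_succ, Finset.Ico_eq_empty (by omega), sum_empty, add_zero,
      ← sum_add_distrib]
    apply sum_congr rfl
    intro l hl
    rw [sum_Ico_succ_top (by have := mem_range.mp hl; omega)]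

lemma swap_le {M : Type*} [AddCommMonoid M] (n : ℕ) (f : ℕ → ℕ → M) :
    ∑ m ∈ range n, ∑ l ∈ range (m + 1), f m l = ∑ l ∈ range n, ∑ m ∈ Ico l n, f m l := by
  induction n with
  | zero => simp
  | succ n ih =>
    rw [sum_range_succ, ih, sum_range_succ, sum_range_succ]
    rw [show ∑ m ∈ Ico n (n + 1), f m n = f n n by rw [Nat.Ico_succ_singleton, sum_singleton]]
    rw [← add_assoc, ← sum_add_distrib]
    congr 1
    apply sum_congr rfl
    intro l hl
    rw [sum_Ico_succ_top (by have := mem_range.mp hl; omega)]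

lemma stmt2G_closed_form {A : Type*} [CommRing A] [Algebra ℚ A] (q : A) (n : ℕ) :
    stmt2G q n = ∑ m ∈ range n, ((n.factorial : ℚ) / ((m + 1).factorial)) • (q ^ 2 - 1) ^ m := by
  have lhs1 : stmt2G q n
      = ∑ l ∈ range (n + 1),
          algebraMap ℚ A (∑ j ∈ Ico (l + 1) (n + 1), rencontres n j) * q ^ (2 * l) := by
    rw [stmt2G]
    simp_rw [stmt2P, Algebra.smul_def, mul_sum]
    rw [swap_lt (n + 1) (fun j l => algebraMap ℚ A (rencontres n j) * q ^ (2 * l))]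
    simp_rw [map_sum, sum_mul]
  have rhs1 : (∑ m ∈ range n, ((n.factorial : ℚ) / ((m + 1).factorial)) • (q ^ 2 - 1) ^ m)
      = ∑ l ∈ range n, ∑ m ∈ Ico l n,
          algebraMap ℚ A (((n.factorial : ℚ) / ((m + 1).factorial))
            * ((-1) ^ (l + m) * (m.choose l))) * q ^ (2 * l) := by
    rw [← swap_le n]
    apply sum_congr rfl; intro m hm
    rw [Algebra.smul_def, sub_pow, mul_sum]
    apply sum_congr rfl; intro l hl
    rw [map_mul, map_mul, map_pow, map_neg, map_one, map_natCast, one_pow, pow_mul]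
    ring
  rw [lhs1, rhs1, sum_range_succ, Finset.Ico_eq_empty (show ¬ n + 1 < n + 1 by omega),
    sum_empty, map_zero, zero_mul, add_zero]
  apply sum_congr rfl; intro l hl
  rw [rencontres_key n l, map_sum, sum_mul]

/-- `g 0 = 0` and `g (n+1) = (n+1)·g n + (q²-1)^n` for all `n ≥ 0`. -/
theorem stmt_2 {A : Type*} [CommRing A] [Algebra ℚ A] (q : A) :
    stmt2G q 0 = 0 ∧
      ∀ n : ℕ, stmt2G q (n + 1) = ((n : A) + 1) * stmt2G q n + (q ^ 2 - 1) ^ n := by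
  constructor
  · simp [stmt2G, stmt2P]
  · intro n
    rw [stmt2G_closed_form, stmt2G_closed_form, sum_range_succ]
    congr 1
    · rw [mul_sum]
      apply sum_congr rfl; intro m hm
      rw [show (((n + 1).factorial : ℚ) / ((m + 1).factorial))
          = ((n : ℚ) + 1) * ((n.factorial : ℚ) / ((m + 1).factorial)) by
        rw [show (((n + 1).factorial : ℚ)) = (n + 1) * n.factorial by
          exact_mod_cast Nat.factorial_succ n]
        ring]
      rw [mul_smul, Algebra.smul_def, map_add, map_one, map_natCast]
    · rw [div_self (show (((n + 1).factorial : ℚ)) ≠ 0 by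
        exact_mod_cast (n + 1).factorial_ne_zero), one_smul]
end

section
/- In the group ring ℤB_{m+n+k} of the braid group, the braid shuffle elements satisfy Ш_{n+k,m} · (Ш_{k,n})^{↑m} = Ш_{k,m+n} · Ш_{n,m}, where ^{↑m} denotes the shift endomorphism σ_i ↦ σ_{i+m}. -/
/-! The braid group `B_∞` (inductive limit of the Artin braid groups), its integral
group ring, the shift endomorphism `↑m`, and the braid shuffle elements `Ш_{m,n}`.
The generator `br i` represents the Artin generator `σ_{i+1}`. -/

/-- Relators of the Artin presentation of `B_∞`. -/
def braidRels : Set (FreeGroup ℕ) :=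
  {r | (∃ i : ℕ, r = .of i * .of (i + 1) * .of i * (.of (i + 1) * .of i * .of (i + 1))⁻¹) ∨
       (∃ i j : ℕ, i + 2 ≤ j ∧ r = .of i * .of j * (.of j * .of i)⁻¹)}

/-- The braid group `B_∞`. -/
abbrev BraidInf : Type := PresentedGroup braidRels

/-- The Artin generator `σ_{i+1}` of `B_∞`. -/
def br (i : ℕ) : BraidInf := PresentedGroup.of i

lemma braidRels_mk_eq_one {r : FreeGroup ℕ} (h : r ∈ braidRels) :
    PresentedGroup.mk braidRels r = 1 :=
  (QuotientGroup.eq_one_iff r).mpr (Subgroup.subset_normalClosure h)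

lemma br_braid (i : ℕ) : br i * br (i + 1) * br i = br (i + 1) * br i * br (i + 1) := by
  have h := braidRels_mk_eq_one (Or.inl ⟨i, rfl⟩)
  rw [map_mul, map_mul, map_inv, map_mul, map_mul, mul_inv_eq_one] at h
  exact h

lemma br_comm {i j : ℕ} (hij : i + 2 ≤ j) : br i * br j = br j * br i := by
  have h := braidRels_mk_eq_one (Or.inr ⟨i, j, hij, rfl⟩)
  rw [map_mul, map_inv, map_mul, mul_inv_eq_one] at h
  exact h

/-- The shift endomorphism of `B_∞`, sending `σ_i` to `σ_{i+m}`. -/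
noncomputable def braidShift (m : ℕ) : BraidInf →* BraidInf :=
  PresentedGroup.toGroup (f := fun i => br (i + m)) (by
    rintro r (⟨i, rfl⟩ | ⟨i, j, hij, rfl⟩) <;>
      simp only [map_mul, map_inv, FreeGroup.lift_apply_of, mul_inv_eq_one]
    · rw [show i + 1 + m = i + m + 1 from by omega]
      exact br_braid (i + m)
    · exact br_comm (by omega))

/-- The descending word `σ_{b+k+1} σ_{b+k} ⋯ σ_{b+1}` (in 1-based notation):
`br (b+k) * br (b+k-1) * ⋯ * br b`. -/
def descWord : ℕ → ℕ → BraidInf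
  | 0, b => br b
  | k + 1, b => br (b + k + 1) * descWord k b

/-- The braid shuffle elements `Ш_{m,n} ∈ ℤB_∞`, defined by the Pascal-type recurrence
`Ш_{m,n} = Ш_{m-1,n} + Ш_{m,n-1}·σ_{m+n-1}⋯σ_n` with `Ш_{0,n} = Ш_{n,0} = 1`. -/
noncomputable def Sha : ℕ → ℕ → MonoidAlgebra ℤ BraidInf
  | 0, _ => 1
  | _ + 1, 0 => 1
  | m + 1, n + 1 =>
      Sha m (n + 1) + Sha (m + 1) n * MonoidAlgebra.of ℤ BraidInf (descWord m n)

/-- The shift `↑m` on the group ring `ℤB_∞`. -/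
noncomputable def ringShift (m : ℕ) :
    MonoidAlgebra ℤ BraidInf →+* MonoidAlgebra ℤ BraidInf :=
  MonoidAlgebra.mapDomainRingHom ℤ (braidShift m)

/-! ### Auxiliary lemmas -/

noncomputable abbrev oA : BraidInf →* MonoidAlgebra ℤ BraidInf := MonoidAlgebra.of ℤ BraidInf

lemma braidShift_br (m i : ℕ) : braidShift m (br i) = br (i + m) :=
  PresentedGroup.toGroup.of _

lemma braidShift_zero_apply (x : BraidInf) : braidShift 0 x = x := by
  have h : braidShift 0 = MonoidHom.id BraidInf := by
    apply PresentedGroup.ext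
    intro i
    exact braidShift_br 0 i
  rw [h]; rfl

lemma ringShift_of (m : ℕ) (g : BraidInf) :
    ringShift m (oA g) = oA (braidShift m g) := by
  simp [ringShift, oA, MonoidAlgebra.mapDomainRingHom, MonoidAlgebra.of_apply,
    Finsupp.mapDomain_single]

lemma ringShift_zero_apply (x : MonoidAlgebra ℤ BraidInf) : ringShift 0 x = x := by
  have : ∀ g : BraidInf, braidShift 0 g = g := braidShift_zero_apply
  simp only [ringShift, MonoidAlgebra.mapDomainRingHom, RingHom.coe_mk, MonoidHom.coe_mk,
    OneHom.coe_mk]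
  rw [show (⇑(braidShift 0) : BraidInf → BraidInf) = id from funext this]
  simp [MonoidAlgebra.mapDomain, Finsupp.mapDomain_id]

lemma Sha_zero_left (b : ℕ) : Sha 0 b = 1 := by rw [Sha]

lemma Sha_zero_right (a : ℕ) : Sha a 0 = 1 := by cases a <;> rw [Sha]

lemma Sha_succ_succ (a b : ℕ) :
    Sha (a + 1) (b + 1) = Sha a (b + 1) + Sha (a + 1) b * oA (descWord a b) := by
  rw [Sha]

lemma descWord_succ (k b : ℕ) : descWord (k + 1) b = br (b + k + 1) * descWord k b := rfl

lemma braidShift_descWord (m k b : ℕ) :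
    braidShift m (descWord k b) = descWord k (b + m) := by
  induction k with
  | zero => rw [descWord, descWord, braidShift_br]
  | succ k ih =>
      rw [descWord_succ, map_mul, ih, braidShift_br, descWord_succ,
        show b + k + 1 + m = b + m + k + 1 from by omega]

lemma ringShift_descWord (m k b : ℕ) :
    ringShift m (oA (descWord k b)) = oA (descWord k (b + m)) := by
  rw [ringShift_of, braidShift_descWord]

lemma descWord_comm_high {k b j : ℕ} (h : b + k + 2 ≤ j) :
    Commute (descWord k b) (br j) := by
  induction k with
  | zero => exact br_comm (by omega)
  | succ k ih =>
      rw [descWord_succ]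
      exact Commute.mul_left (br_comm (by omega)) (ih (by omega))

lemma descWord_swap {a b i : ℕ} (h : i < a) :
    descWord a b * br (b + i + 1) = br (b + i) * descWord a b := by
  induction a generalizing i with
  | zero => omega
  | succ a ih =>
      rcases Nat.lt_or_ge i a with hi | hi
      · calc descWord (a + 1) b * br (b + i + 1)
            = br (b + a + 1) * (descWord a b * br (b + i + 1)) := by
              rw [descWord_succ, mul_assoc]
          _ = br (b + a + 1) * (br (b + i) * descWord a b) := by rw [ih hi]
          _ = br (b + a + 1) * br (b + i) * descWord a b := by rw [mul_assoc]
          _ = br (b + i) * br (b + a + 1) * descWord a b := by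
              rw [(br_comm (show b + i + 2 ≤ b + a + 1 from by omega)).symm]
          _ = br (b + i) * descWord (a + 1) b := by rw [mul_assoc, descWord_succ]
      · have hia : a = i := by omega
        subst hia
        cases a with
        | zero =>
            rw [descWord_succ, descWord]
            calc br (b + 0 + 1) * br b * br (b + 0 + 1)
                = br b * br (b + 1) * br b := by
                  rw [show b + 0 + 1 = b + 1 from rfl, ← br_braid b]
              _ = br (b + 0) * (br (b + 0 + 1) * br b) := by
                  rw [show b + 0 + 1 = b + 1 from rfl, show b + 0 = b from rfl, mul_assoc]
        | succ a =>
            have hc : Commute (descWord a b) (br (b + a + 1 + 1)) :=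
              descWord_comm_high (by omega)
            have e1 : b + (a + 1) + 1 = b + a + 1 + 1 := by omega
            have e2 : b + (a + 1) = b + a + 1 := by omega
            simp only [e1, e2]
            calc descWord (a + 1 + 1) b * br (b + a + 1 + 1)
                = br (b + a + 1 + 1) * br (b + a + 1) *
                    (descWord a b * br (b + a + 1 + 1)) := by
                  rw [descWord_succ, descWord_succ]; simp only [e1, e2]; group
              _ = br (b + a + 1 + 1) * br (b + a + 1) *
                    (br (b + a + 1 + 1) * descWord a b) := by rw [hc.eq]
              _ = br (b + a + 1) * br (b + a + 1 + 1) * br (b + a + 1) *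
                    descWord a b := by
                  rw [← mul_assoc, ← br_braid (b + a + 1)]
              _ = br (b + a + 1) * descWord (a + 1 + 1) b := by
                  rw [descWord_succ, descWord_succ]; simp only [e1, e2]; group

lemma descWord_descWord_swap {a b c kk : ℕ} (h : c + kk < a) :
    descWord a b * descWord kk (b + c + 1) = descWord kk (b + c) * descWord a b := by
  induction kk with
  | zero =>
      rw [descWord, descWord]
      exact descWord_swap (by omega)
  | succ kk ih =>
      calc descWord a b * descWord (kk + 1) (b + c + 1)
          = descWord a b * br (b + (c + kk + 1) + 1) * descWord kk (b + c + 1) := by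
            rw [descWord_succ, show b + c + 1 + kk + 1 = b + (c + kk + 1) + 1 from by omega]
            group
        _ = br (b + (c + kk + 1)) * (descWord a b * descWord kk (b + c + 1)) := by
            rw [descWord_swap (show c + kk + 1 < a from by omega)]; group
        _ = br (b + (c + kk + 1)) * (descWord kk (b + c) * descWord a b) := by
            rw [ih (by omega)]
        _ = descWord (kk + 1) (b + c) * descWord a b := by
            rw [descWord_succ, show b + c + kk + 1 = b + (c + kk + 1) from by omega]
            group

lemma descWord_split (u v b : ℕ) :
    descWord (u + v + 1) b = descWord u (b + v + 1) * descWord v b := by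
  induction u with
  | zero => rw [descWord_succ, descWord, Nat.zero_add]
  | succ u ih =>
      calc descWord (u + 1 + v + 1) b
          = br (b + v + 1 + u + 1) * descWord (u + v + 1) b := by
            rw [show u + 1 + v + 1 = (u + v + 1) + 1 from by omega, descWord_succ,
              show b + (u + v + 1) + 1 = b + v + 1 + u + 1 from by omega]
        _ = br (b + v + 1 + u + 1) * descWord u (b + v + 1) * descWord v b := by
            rw [ih]; group
        _ = descWord (u + 1) (b + v + 1) * descWord v b := by rw [descWord_succ]

lemma sha_commute_br (a b j : ℕ) (h : a + b ≤ j) :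
    Commute (Sha a b) (oA (br j)) := by
  match a, b with
  | 0, b => rw [Sha_zero_left]; exact Commute.one_left _
  | a + 1, 0 => rw [Sha_zero_right]; exact Commute.one_left _
  | a + 1, b + 1 =>
      rw [Sha_succ_succ]
      have h1 := sha_commute_br a (b + 1) j (by omega)
      have h2 := sha_commute_br (a + 1) b j (by omega)
      have h3 : Commute (descWord a b) (br j) := descWord_comm_high (by omega)
      exact h1.add_left (h2.mul_left (h3.map oA))
termination_by a + b

lemma sha_commute_descWord (a b kk c : ℕ) (h : a + b ≤ c) :
    Commute (Sha a b) (oA (descWord kk c)) := by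
  induction kk with
  | zero => rw [descWord]; exact sha_commute_br a b c h
  | succ kk ih =>
      rw [descWord_succ, map_mul]
      exact (sha_commute_br a b (c + kk + 1) (by omega)).mul_right ih

lemma key_swap (a b p q : ℕ) (h : p + q ≤ a + 1) :
    oA (descWord a b) * ringShift (b + 1) (Sha p q)
      = ringShift b (Sha p q) * oA (descWord a b) := by
  match p, q with
  | 0, q => rw [Sha_zero_left, map_one, map_one, one_mul, mul_one]
  | p + 1, 0 => rw [Sha_zero_right, map_one, map_one, one_mul, mul_one]
  | p + 1, q + 1 =>
      have e1 := key_swap a b p (q + 1) (by omega)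
      have e2 := key_swap a b (p + 1) q (by omega)
      have e3 : oA (descWord a b) * oA (descWord p (b + q + 1))
          = oA (descWord p (b + q)) * oA (descWord a b) := by
        rw [← map_mul, ← map_mul, descWord_descWord_swap (show q + p < a from by omega)]
      calc oA (descWord a b) * ringShift (b + 1) (Sha (p + 1) (q + 1))
          = oA (descWord a b) * ringShift (b + 1) (Sha p (q + 1))
            + oA (descWord a b) * (ringShift (b + 1) (Sha (p + 1) q)
              * oA (descWord p (b + q + 1))) := by
            rw [Sha_succ_succ, map_add, map_mul, ringShift_descWord,
              show q + (b + 1) = b + q + 1 from by omega, mul_add]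
        _ = ringShift b (Sha p (q + 1)) * oA (descWord a b)
            + ringShift b (Sha (p + 1) q) * oA (descWord p (b + q))
              * oA (descWord a b) := by
            rw [e1, ← mul_assoc, e2, mul_assoc, e3, ← mul_assoc]
        _ = ringShift b (Sha (p + 1) (q + 1)) * oA (descWord a b) := by
            rw [Sha_succ_succ, map_add, map_mul, ringShift_descWord,
              show q + b = b + q from by omega, add_mul]
termination_by p + q

/-- `Ш_{n+k,m} · (Ш_{k,n})^{↑m} = Ш_{k,m+n} · Ш_{n,m}` in `ℤB_∞`
(all the elements involved lie in `ℤB_{m+n+k}`). -/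
theorem stmt_5 (m n k : ℕ) :
    Sha (n + k) m * ringShift m (Sha k n) = Sha k (m + n) * Sha n m := by
  suffices H : ∀ N m n k : ℕ, m + n + k ≤ N →
      Sha (n + k) m * ringShift m (Sha k n) = Sha k (m + n) * Sha n m from
    H (m + n + k) m n k le_rfl
  intro N
  induction N with
  | zero =>
      intro m n k h
      obtain ⟨rfl, rfl, rfl⟩ : m = 0 ∧ n = 0 ∧ k = 0 := by omega
      simp [Sha_zero_left, ringShift_zero_apply]
  | succ N ih =>
      intro m n k h
      match m, n, k with
      | 0, n, k =>
          rw [Sha_zero_right, ringShift_zero_apply, Nat.zero_add, Sha_zero_right,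
            one_mul, mul_one]
      | m + 1, 0, k =>
          rw [Sha_zero_right, map_one, mul_one, Nat.zero_add, Nat.add_zero,
            Sha_zero_left, mul_one]
      | m + 1, n + 1, 0 =>
          rw [Nat.add_zero, Sha_zero_left, map_one, mul_one, Sha_zero_left, one_mul]
      | m + 1, n + 1, k + 1 =>
          have IH1 := ih (m + 1) (n + 1) k (by omega)
          rw [show n + 1 + k = n + k + 1 from by omega] at IH1
          have IH2 := ih (m + 1) n (k + 1) (by omega)
          have IH3 := ih m (n + 1) (k + 1) (by omega)
          -- normalize indices in IHs
          rw [show m + 1 + (n + 1) = m + n + 2 from by omega] at IH1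
          rw [show n + (k + 1) = n + k + 1 from by omega,
            show m + 1 + n = m + n + 1 from by omega] at IH2
          rw [show n + 1 + (k + 1) = n + k + 2 from by omega,
            show m + (n + 1) = m + n + 1 from by omega] at IH3
          rw [show n + 1 + (k + 1) = n + k + 2 from by omega,
            show m + 1 + (n + 1) = m + n + 2 from by omega]
          -- expansions
          have EL : Sha (n + k + 2) (m + 1)
              = Sha (n + k + 1) (m + 1) + Sha (n + k + 2) m * oA (descWord (n + k + 1) m) := by
            rw [show n + k + 2 = (n + k + 1) + 1 from rfl, Sha_succ_succ]
          have ER : ringShift (m + 1) (Sha (k + 1) (n + 1))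
              = ringShift (m + 1) (Sha k (n + 1))
                + ringShift (m + 1) (Sha (k + 1) n) * oA (descWord k (m + n + 1)) := by
            rw [Sha_succ_succ, map_add, map_mul, ringShift_descWord,
              show n + (m + 1) = m + n + 1 from by omega]
          have comm1 : Sha n (m + 1) * oA (descWord k (m + n + 1))
              = oA (descWord k (m + n + 1)) * Sha n (m + 1) :=
            sha_commute_descWord n (m + 1) k (m + n + 1) (by omega)
          have comm2 : Sha (n + 1) m * oA (descWord k (m + n + 1))
              = oA (descWord k (m + n + 1)) * Sha (n + 1) m :=
            sha_commute_descWord (n + 1) m k (m + n + 1) (by omega)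
          have hsplit : oA (descWord (n + k + 1) m)
              = oA (descWord k (m + n + 1)) * oA (descWord n m) := by
            rw [← map_mul, show n + k + 1 = k + n + 1 from by omega, descWord_split,
              show m + n + 1 = m + n + 1 from rfl]
          have hkey : oA (descWord (n + k + 1) m) * ringShift (m + 1) (Sha (k + 1) (n + 1))
              = ringShift m (Sha (k + 1) (n + 1)) * oA (descWord (n + k + 1) m) :=
            key_swap (n + k + 1) m (k + 1) (n + 1) (by omega)
          calc Sha (n + k + 2) (m + 1) * ringShift (m + 1) (Sha (k + 1) (n + 1))
              = Sha (n + k + 1) (m + 1) * ringShift (m + 1) (Sha k (n + 1))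
                + Sha (n + k + 1) (m + 1) * ringShift (m + 1) (Sha (k + 1) n)
                  * oA (descWord k (m + n + 1))
                + Sha (n + k + 2) m
                  * (oA (descWord (n + k + 1) m) * ringShift (m + 1) (Sha (k + 1) (n + 1))) := by
                rw [EL, add_mul]
                nth_rewrite 1 [ER]
                rw [mul_add, mul_assoc]
                noncomm_ring
            _ = Sha k (m + n + 2) * Sha (n + 1) (m + 1)
                + Sha (k + 1) (m + n + 1) * oA (descWord k (m + n + 1)) * Sha n (m + 1)
                + Sha (k + 1) (m + n + 1) * Sha (n + 1) m * oA (descWord (n + k + 1) m) := by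
                rw [IH1, hkey,
                  show Sha (n + k + 2) m * ((ringShift m) (Sha (k + 1) (n + 1))
                      * oA (descWord (n + k + 1) m))
                    = Sha (n + k + 2) m * (ringShift m) (Sha (k + 1) (n + 1))
                      * oA (descWord (n + k + 1) m) from by noncomm_ring,
                  IH3, IH2, mul_assoc (Sha (k + 1) (m + n + 1)) (Sha n (m + 1)), comm1]
                noncomm_ring
            _ = Sha k (m + n + 2) * Sha (n + 1) (m + 1)
                + Sha (k + 1) (m + n + 1) * oA (descWord k (m + n + 1)) * Sha n (m + 1)
                + Sha (k + 1) (m + n + 1) * oA (descWord k (m + n + 1))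
                  * (Sha (n + 1) m * oA (descWord n m)) := by
                rw [hsplit,
                  show Sha (k + 1) (m + n + 1) * Sha (n + 1) m
                      * (oA (descWord k (m + n + 1)) * oA (descWord n m))
                    = Sha (k + 1) (m + n + 1) * (Sha (n + 1) m * oA (descWord k (m + n + 1)))
                      * oA (descWord n m) from by noncomm_ring,
                  comm2]
                noncomm_ring
            _ = Sha (k + 1) (m + n + 2) * Sha (n + 1) (m + 1) := by
                have hA : Sha (k + 1) (m + n + 2)
                    = Sha k (m + n + 2) + Sha (k + 1) (m + n + 1) * oA (descWord k (m + n + 1)) := by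
                  rw [show m + n + 2 = m + n + 1 + 1 from by omega, Sha_succ_succ]
                have hB : Sha (n + 1) (m + 1)
                    = Sha n (m + 1) + Sha (n + 1) m * oA (descWord n m) := Sha_succ_succ n m
                rw [hA, hB]
                noncomm_ring
end

section
/- In the braid group B_{m+n}, the two expressions (σ_m σ_{m+1}···σ_{m+n-1})(σ_{m-1}σ_m···σ_{m+n-2})···(σ_1 σ_2···σ_n) and (σ_m σ_{m-1}···σ_1)(σ_{m+1}σ_m···σ_2)···(σ_{m+n-1}σ_{m+n-2}···σ_n) define the same element Ш̄_{m,n}. -/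
/-- The ascending run `σ_{a+1} σ_{a+2} ⋯ σ_{a+k+1}` (1-based):
`br a * br (a+1) * ⋯ * br (a+k)`. -/
def ascFrom : ℕ → ℕ → BraidInf
  | a, 0 => br a
  | a, k + 1 => ascFrom a k * br (a + k + 1)

/-- The descending run `σ_{a+1} σ_a ⋯ σ_{a-k+1}` (1-based):
`br a * br (a-1) * ⋯ * br (a-k)`. -/
def descFrom : ℕ → ℕ → BraidInf
  | a, 0 => br a
  | a, k + 1 => descFrom a k * br (a - (k + 1))

lemma desc_succ (a k : ℕ) : descFrom (a + 1) (k + 1) = br (a + 1) * descFrom a k := by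
  induction k with
  | zero => simp [descFrom]
  | succ k ih =>
      rw [show descFrom (a+1) (k+2) = descFrom (a+1) (k+1) * br (a+1 - (k+2)) from rfl, ih,
        show a + 1 - (k + 2) = a - (k + 1) from by omega, mul_assoc]
      rfl

lemma comm_br_asc (k a j : ℕ) (h : a + k + 2 ≤ j) :
    br j * ascFrom a k = ascFrom a k * br j := by
  induction k with
  | zero => exact (br_comm (by omega)).symm
  | succ k ih =>
      rw [show ascFrom a (k+1) = ascFrom a k * br (a + k + 1) from rfl, ← mul_assoc,
        ih (by omega), mul_assoc,
        show br j * br (a + k + 1) = br (a + k + 1) * br j from (br_comm (by omega)).symm,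
        ← mul_assoc]

lemma range_succ_prod (m : ℕ) (f : ℕ → BraidInf) :
    ((List.range (m + 1)).map f).prod = f 0 * ((List.range m).map (fun t => f (t + 1))).prod := by
  rw [List.range_succ_eq_map, List.map_cons, List.prod_cons, List.map_map]
  rfl

/-- Product of ascending blocks. -/
def P (m n : ℕ) : BraidInf := ((List.range (m + 1)).map fun t => ascFrom (m - t) n).prod

lemma P_succ (m n : ℕ) : P (m + 1) n = ascFrom (m + 1) n * P m n := by
  unfold P
  rw [range_succ_prod]
  simp

lemma comm_br_P (m n j : ℕ) (h : m + n + 2 ≤ j) : br j * P m n = P m n * br j := by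
  induction m with
  | zero => simpa [P] using comm_br_asc n 0 j (by omega)
  | succ m ih =>
      rw [P_succ, ← mul_assoc, comm_br_asc n (m + 1) j (by omega), mul_assoc,
        ih (by omega), mul_assoc]

lemma step (m n : ℕ) :
    ((List.range (m + 1)).map fun t => ascFrom (m - t) n * br (m - t + n + 1)).prod =
      P m n * descFrom (m + n + 1) m := by
  induction m with
  | zero => simp [P, descFrom]
  | succ m ih =>
      rw [range_succ_prod]
      have e : ((List.range (m + 1)).map
          (fun t => ascFrom (m + 1 - (t + 1)) n * br (m + 1 - (t + 1) + n + 1))).prod =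
          ((List.range (m + 1)).map fun t => ascFrom (m - t) n * br (m - t + n + 1)).prod := by
        simp
      simp only [Nat.sub_zero] at e ⊢
      rw [e, ih, show m + 1 + n + 1 = m + n + 1 + 1 from by omega, desc_succ, P_succ,
        mul_assoc, mul_assoc]
      congr 1
      rw [← mul_assoc, comm_br_P m n (m + n + 1 + 1) (by omega), mul_assoc]

lemma P_zero (m : ℕ) : P m 0 = descFrom m m := by
  induction m with
  | zero => simp [P, ascFrom, descFrom]
  | succ m ih => rw [P_succ, ih, show ascFrom (m+1) 0 = br (m+1) from rfl, ← desc_succ]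

/-- with `M = m+1`, `N = n+1`, the two words
`(σ_M ⋯ σ_{M+N-1})(σ_{M-1} ⋯ σ_{M+N-2}) ⋯ (σ_1 ⋯ σ_N)` (M ascending blocks of length N) and
`(σ_M σ_{M-1} ⋯ σ_1)(σ_{M+1} σ_M ⋯ σ_2) ⋯ (σ_{M+N-1} ⋯ σ_N)` (N descending blocks of length M)
define the same element `Ш̄_{M,N}` of the braid group `B_{M+N}`. -/
theorem stmt_8 (m n : ℕ) :
    ((List.range (m + 1)).map fun t => ascFrom (m - t) n).prod =
      ((List.range (n + 1)).map fun t => descFrom (m + t) m).prod := by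
  induction n with
  | zero =>
      show P m 0 = _
      rw [P_zero, show List.range 1 = [0] from rfl]
      simp
  | succ n ih =>
      have lhs : ((List.range (m + 1)).map fun t => ascFrom (m - t) (n + 1)).prod =
          ((List.range (m + 1)).map fun t => ascFrom (m - t) n * br (m - t + n + 1)).prod := rfl
      have rhs : ((List.range (n + 1 + 1)).map fun t => descFrom (m + t) m).prod =
          ((List.range (n + 1)).map fun t => descFrom (m + t) m).prod * descFrom (m + n + 1) m := by
        rw [List.range_succ]
        simp [← add_assoc]
      rw [lhs, step, rhs, show P m n = _ from ih]
end

section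
/- In the Hecke algebra H_n(q), the baxterized elements σ_i(x) = (x σ_i - x⁻¹ σ_i⁻¹)/(q - q⁻¹) satisfy the Yang–Baxter equation with spectral parameters: σ_i(x)·σ_{i+1}(xy)·σ_i(y) = σ_{i+1}(y)·σ_i(xy)·σ_{i+1}(x), and the unitarity condition σ_i(x)·σ_i(x⁻¹) = 1 - (x-x⁻¹)²/(q-q⁻¹)². -/
/-- The baxterized element `σ(x) = (x·σ - x⁻¹·σ⁻¹)/(q - q⁻¹)`, where `si` denotes the
inverse `σ⁻¹` of `s = σ`. -/
def bax {K A : Type*} [Field K] [Ring A] [Module K A] (q x : K) (s si : A) : A :=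
  (q - q⁻¹)⁻¹ • (x • s - x⁻¹ • si)

set_option maxHeartbeats 1000000 in
/-- in the Hecke algebra (any algebra containing invertible elements
`a = σ_i`, `b = σ_{i+1}` satisfying the braid and Hecke relations), the baxterized
elements satisfy the Yang–Baxter equation with (multiplicative) spectral parameters
`σ_i(x)·σ_{i+1}(xy)·σ_i(y) = σ_{i+1}(y)·σ_i(xy)·σ_{i+1}(x)` and the unitarity condition
`σ_i(x)·σ_i(x⁻¹) = 1 - (x-x⁻¹)²/(q-q⁻¹)²`. -/
theorem stmt_16 {K A : Type*} [Field K] [Ring A] [Algebra K A]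
    (q x y : K) (hq0 : q ≠ 0) (hq2 : q ^ 2 ≠ 1) (hx : x ≠ 0) (hy : y ≠ 0)
    (a b ai bi : A)
    (ha : a * ai = 1) (ha' : ai * a = 1) (hb : b * bi = 1) (hb' : bi * b = 1)
    (hbraid : a * b * a = b * a * b)
    (hqa : a * a = (q - q⁻¹) • a + 1) (hqb : b * b = (q - q⁻¹) • b + 1) :
    bax q x a ai * bax q (x * y) b bi * bax q y a ai =
        bax q y b bi * bax q (x * y) a ai * bax q x b bi ∧
      bax q x a ai * bax q x⁻¹ a ai =
        algebraMap K A (1 - (x - x⁻¹) ^ 2 / (q - q⁻¹) ^ 2) := by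
  set δ := q - q⁻¹ with hδdef
  have hδ : δ ≠ 0 := by
    intro h
    apply hq2
    have h2 : q ^ 2 - 1 = q * δ := by
      rw [hδdef]; field_simp
    have h3 : q ^ 2 - 1 = 0 := by rw [h2, h, mul_zero]
    exact sub_eq_zero.mp h3
  clear_value δ
  have hai : ai = a - δ • (1 : A) := by
    have h1 : a * (a - δ • (1 : A)) = 1 := by
      rw [mul_sub, hqa, mul_smul_comm, mul_one]; abel
    calc ai = ai * (a * (a - δ • (1 : A))) := by rw [h1, mul_one]
    _ = (ai * a) * (a - δ • (1 : A)) := by rw [mul_assoc]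
    _ = a - δ • (1 : A) := by rw [ha', one_mul]
  have hbi : bi = b - δ • (1 : A) := by
    have h1 : b * (b - δ • (1 : A)) = 1 := by
      rw [mul_sub, hqb, mul_smul_comm, mul_one]; abel
    calc bi = bi * (b * (b - δ • (1 : A))) := by rw [h1, mul_one]
    _ = (bi * b) * (b - δ • (1 : A)) := by rw [mul_assoc]
    _ = b - δ • (1 : A) := by rw [hb', one_mul]
  have haa : ∀ r : A, a * (a * r) = δ • (a * r) + r := by
    intro r
    rw [← mul_assoc, hqa, add_mul, smul_mul_assoc, one_mul]
  have hbb : ∀ r : A, b * (b * r) = δ • (b * r) + r := by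
    intro r
    rw [← mul_assoc, hqb, add_mul, smul_mul_assoc, one_mul]
  have hbab : ∀ r : A, b * (a * (b * r)) = a * (b * (a * r)) := by
    intro r
    rw [← mul_assoc, ← mul_assoc, ← hbraid, mul_assoc, mul_assoc]
  have hbab1 : b * (a * b) = a * (b * a) := by
    have := hbab 1; simpa using this
  constructor
  · simp only [bax, hai, hbi, smul_sub, smul_smul, sub_mul, mul_sub, smul_mul_assoc,
      mul_smul_comm, mul_one, one_mul, mul_assoc, hqa, hqb, haa, hbb, hbab, hbab1, ← hδdef]
    match_scalars
    all_goals try ring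
    all_goals (field_simp [hδ, hx, hy]; try ring)
  · simp only [bax, hai, smul_sub, smul_smul, sub_mul, mul_sub, smul_mul_assoc,
      mul_smul_comm, mul_one, one_mul, mul_assoc, hqa, haa, Algebra.algebraMap_eq_smul_one,
      ← hδdef]
    match_scalars
    all_goals try ring
    all_goals (field_simp [hδ, hx, hy]; try ring)
end
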